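/- Let V be a simple object of R. Then either E(V) is a simple object of C, or there exists a simple object W of C such that E(V) ≅ W ⊕ B(W) in C and F(W) ≅ V in R. -/

import Mathlib

/-!
`E` is left adjoint to the forgetful functor `F` (a morphism `E V ⟶ W` is determined by its
restriction to the first summand), so `F` preserves monomorphisms; being faithful and reflecting
isomorphisms, it reflects simplicity.

If `V` carries a complex structure `J`, then `(x, y) ↦ ((x + J y) / 2, (x - J y) / 2)` splits
`E V` as `(V, J) ⊕ (V, -J)`. Otherwise let `f : Y ⟶ E V` be a nonzero subobject, with first
component `a : F Y ⟶ V`; `ι`-equivariance forces the second component to be `-ι a`. If `ker a = 0`,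
then `a` is an isomorphism (as `V` is simple) transporting `ι` to a complex structure on `V`, which
is excluded. Otherwise `f` maps `ker a` monomorphically, hence isomorphically, onto the second
summand, and by equivariance the image of `f` also contains the first one, so `f` is an iso.
-/

set_option linter.unusedSectionVars false

open CategoryTheory CategoryTheory.Limits

universe v u

variable (R : Type u) [Category.{v} R] [Abelian R] [CategoryTheory.Linear ℝ R]

/-- Objects of the category `C`: pairs `(V, ι)` with `ι ∘ ι = -1`. -/
structure CObj : Type max u v where
  V : R
  ι : V ⟶ V
  hι : ι ≫ ι = -𝟙 V

variable {R}

instance : Category.{v} (CObj R) where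
  Hom W₁ W₂ := { φ : W₁.V ⟶ W₂.V // W₁.ι ≫ φ = φ ≫ W₂.ι }
  id W := ⟨𝟙 W.V, by simp⟩
  comp f g := ⟨f.1 ≫ g.1, by
    rw [← Category.assoc, f.2, Category.assoc, g.2, Category.assoc]⟩
  id_comp f := Subtype.ext (Category.id_comp f.1)
  comp_id f := Subtype.ext (Category.comp_id f.1)
  assoc f g h := Subtype.ext (Category.assoc f.1 g.1 h.1)

@[ext]
lemma CObj.hom_ext {W₁ W₂ : CObj R} {f g : W₁ ⟶ W₂} (h : f.1 = g.1) : f = g :=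
  Subtype.ext h

@[simp]
lemma CObj.id_coe (W : CObj R) : (𝟙 W : W ⟶ W).1 = 𝟙 W.V := rfl

@[simp]
lemma CObj.comp_coe {W₁ W₂ W₃ : CObj R} (f : W₁ ⟶ W₂) (g : W₂ ⟶ W₃) :
    (f ≫ g).1 = f.1 ≫ g.1 := rfl

instance (W₁ W₂ : CObj R) : Zero (W₁ ⟶ W₂) := ⟨⟨0, by simp⟩⟩

instance (W₁ W₂ : CObj R) : Add (W₁ ⟶ W₂) :=
  ⟨fun f g => ⟨f.1 + g.1, by rw [Preadditive.comp_add, Preadditive.add_comp, f.2, g.2]⟩⟩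

instance (W₁ W₂ : CObj R) : Neg (W₁ ⟶ W₂) :=
  ⟨fun f => ⟨-f.1, by rw [Preadditive.comp_neg, Preadditive.neg_comp, f.2]⟩⟩

instance (W₁ W₂ : CObj R) : Sub (W₁ ⟶ W₂) :=
  ⟨fun f g => ⟨f.1 - g.1, by rw [Preadditive.comp_sub, Preadditive.sub_comp, f.2, g.2]⟩⟩

instance (W₁ W₂ : CObj R) : SMul ℕ (W₁ ⟶ W₂) :=
  ⟨fun n f => ⟨n • f.1, by rw [Linear.comp_smul, Linear.smul_comp, f.2]⟩⟩

instance (W₁ W₂ : CObj R) : SMul ℤ (W₁ ⟶ W₂) :=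
  ⟨fun n f => ⟨n • f.1, by rw [Linear.comp_smul, Linear.smul_comp, f.2]⟩⟩

@[simp] lemma CObj.zero_coe (W₁ W₂ : CObj R) : (0 : W₁ ⟶ W₂).1 = 0 := rfl
@[simp] lemma CObj.add_coe {W₁ W₂ : CObj R} (f g : W₁ ⟶ W₂) : (f + g).1 = f.1 + g.1 := rfl
@[simp] lemma CObj.neg_coe {W₁ W₂ : CObj R} (f : W₁ ⟶ W₂) : (-f).1 = -f.1 := rfl

instance (W₁ W₂ : CObj R) : AddCommGroup (W₁ ⟶ W₂) :=
  Function.Injective.addCommGroup (fun f : W₁ ⟶ W₂ => f.1) Subtype.val_injective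
    rfl (fun _ _ => rfl) (fun _ => rfl) (fun _ _ => rfl) (fun _ _ => rfl) (fun _ _ => rfl)

instance : Preadditive (CObj R) where
  add_comp P Q S f f' g := by apply Subtype.ext; exact Preadditive.add_comp _ _ _ f.1 f'.1 g.1
  comp_add P Q S f g g' := by apply Subtype.ext; exact Preadditive.comp_add _ _ _ f.1 g.1 g'.1

variable (R)

/-- The conjugation functor `B : C → C`. -/
def Bfunctor : CObj R ⥤ CObj R where
  obj W := ⟨W.V, -W.ι, by simp [W.hι]⟩
  map f := ⟨f.1, by simp [f.2]⟩
  map_id _ := rfl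
  map_comp _ _ := rfl

/-- The forgetful functor `F : C → R`. -/
def Ffunctor : CObj R ⥤ R where
  obj W := W.V
  map f := f.1
  map_id _ := rfl
  map_comp _ _ := rfl

/-- The complexification functor `E : R → C`. -/
noncomputable def Efunctor : R ⥤ CObj R where
  obj V :=
    { V := V ⊞ V
      ι := -(biprod.snd ≫ biprod.inl) + biprod.fst ≫ biprod.inr
      hι := by ext <;> simp }
  map φ := ⟨biprod.map φ φ, by ext <;> simp⟩
  map_id V := Subtype.ext (by ext <;> simp)
  map_comp f g := Subtype.ext (by ext <;> simp)

variable {R}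

/-- The biproduct `(V₁ ⊕ V₂, ι₁ ⊕ ι₂)` of two objects of `C`. -/
noncomputable def csum (W₁ W₂ : CObj R) : CObj R where
  V := W₁.V ⊞ W₂.V
  ι := biprod.map W₁.ι W₂.ι
  hι := by ext <;> simp [W₁.hι, W₂.hι]

/-- Multiplication by `i` as a morphism in `C`. -/
def iMor (W : CObj R) : W ⟶ W := ⟨W.ι, rfl⟩

@[simp]
lemma CObj.comp_ι_ι {W : CObj R} {Z : R} (g : Z ⟶ W.V) : g ≫ W.ι ≫ W.ι = -g := by
  rw [W.hι, Preadditive.comp_neg, Category.comp_id]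

@[simp]
lemma CObj.ι_ι_comp {W : CObj R} {Z : R} (h : W.V ⟶ Z) : W.ι ≫ W.ι ≫ h = -h := by
  rw [← Category.assoc, W.hι, Preadditive.neg_comp, Category.id_comp]

noncomputable def Efunctor.homEquiv (V : R) (W : CObj R) :
    ((Efunctor R).obj V ⟶ W) ≃ (V ⟶ W.V) where
  toFun g := biprod.inl ≫ g.1
  invFun h := ⟨biprod.desc h (h ≫ W.ι), by apply biprod.hom_ext' <;> simp [Efunctor]⟩
  left_inv g := by
    have hg := g.2
    dsimp only [Efunctor] at hg
    ext
    dsimp only [Efunctor]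
    apply biprod.hom_ext' <;> simp [← hg]
  right_inv h := by simp

variable (R) in
noncomputable def Efunctor.adjunction : Efunctor R ⊣ Ffunctor R :=
  Adjunction.mkOfHomEquiv
    { homEquiv := Efunctor.homEquiv
      homEquiv_naturality_left_symm := fun f g => CObj.hom_ext <| by
        show biprod.desc (f ≫ g) ((f ≫ g) ≫ _) = biprod.map f f ≫ biprod.desc g (g ≫ _)
        apply biprod.hom_ext'
        · simp
        · simp only [biprod.inr_desc, biprod.inr_map_assoc]
          exact Category.assoc _ _ _
      homEquiv_naturality_right := fun _ _ => (Category.assoc _ _ _).symm }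

instance : (Ffunctor R).PreservesMonomorphisms :=
  Functor.preservesMonomorphisms_of_adjunction (Efunctor.adjunction R)

instance : (Ffunctor R).PreservesZeroMorphisms where

instance : (Ffunctor R).Faithful where
  map_injective h := CObj.hom_ext h

instance : (Ffunctor R).ReflectsIsomorphisms where
  reflects f hf := by
    have : IsIso f.1 := hf
    refine ⟨⟨inv f.1, ?_⟩, CObj.hom_ext (IsIso.hom_inv_id f.1), CObj.hom_ext (IsIso.inv_hom_id f.1)⟩
    rw [← cancel_mono f.1]
    simp [f.2]

lemma CObj.exists_sq_eq_neg_one_of_iso {V : R} (W : CObj R) (e : W.V ≅ V) :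
    ∃ J : V ⟶ V, J ≫ J = -𝟙 V :=
  ⟨e.inv ≫ W.ι ≫ e.hom, by simp⟩

noncomputable def Efunctor.objIsoCsum (W : CObj R) :
    (Efunctor R).obj W.V ≅ csum W ((Bfunctor R).obj W) where
  hom := ⟨(2⁻¹ : ℝ) • biprod.desc (biprod.lift (𝟙 W.V) (𝟙 W.V)) (biprod.lift W.ι (-W.ι)), by
    dsimp only [Efunctor, csum, Bfunctor]
    ext <;> simp [W.hι]⟩
  inv := ⟨biprod.desc (biprod.lift (𝟙 W.V) (-W.ι)) (biprod.lift (𝟙 W.V) W.ι), by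
    dsimp only [Efunctor, csum, Bfunctor]
    ext <;> simp [W.hι]⟩
  hom_inv_id := by
    ext
    dsimp only [CObj.comp_coe, CObj.id_coe, Efunctor, csum, Bfunctor]
    ext <;> simp [W.hι] <;> module
  inv_hom_id := by
    ext
    dsimp only [CObj.comp_coe, CObj.id_coe, Efunctor, csum, Bfunctor]
    ext <;> simp [W.hι] <;> module

lemma Efunctor.isIso_of_comp_eq_inr {V : R} {Y : CObj R} (f : Y ⟶ (Efunctor R).obj V) [Mono f]
    (t : V ⟶ Y.V) (ht : t ≫ f.1 = biprod.inr) : IsIso f := by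
  let φ : Y.V ⟶ V ⊞ V := f.1
  have hφ : Y.ι ≫ φ = φ ≫ (-(biprod.snd ≫ biprod.inl) + biprod.fst ≫ biprod.inr) := f.2
  replace ht : t ≫ φ = biprod.inr := ht
  have hιt : (t ≫ Y.ι) ≫ φ = -biprod.inl := by
    rw [Category.assoc, hφ, reassoc_of% ht]
    simp
  have hsection : (biprod.fst ≫ (-(t ≫ Y.ι)) + biprod.snd ≫ t) ≫ φ = 𝟙 (V ⊞ V) := by
    simp [hιt, ht]
  have : Epi φ := epi_of_epi_fac hsection
  have : Mono φ := (Ffunctor R).map_mono f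
  have : IsIso ((Ffunctor R).map f) := isIso_of_mono_of_epi φ
  exact isIso_of_reflects_iso f (Ffunctor R)

lemma Efunctor.val_eq_lift {V : R} {Y : CObj R} (f : Y ⟶ (Efunctor R).obj V) :
    (f.1 : Y.V ⟶ V ⊞ V) = biprod.lift (f.1 ≫ biprod.fst) (-(Y.ι ≫ f.1 ≫ biprod.fst)) := by
  dsimp only [Efunctor] at f ⊢
  have hf := f.2
  apply biprod.hom_ext
  · simp
  · simp [reassoc_of% hf]

theorem Efunctor.simple_obj_of_not_exists_sq_eq_neg_one {V : R} [Simple V]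
    (hV : ¬∃ J : V ⟶ V, J ≫ J = -𝟙 V) : Simple ((Efunctor R).obj V) where
  mono_isIso_iff_nonzero {Y} f _ := by
    refine ⟨fun hiso hf => Simple.not_isZero V ?_, fun hf => ?_⟩
    · subst hf
      have : IsIso (0 : Y.V ⟶ V ⊞ V) := (Ffunctor R).map_isIso (0 : Y ⟶ (Efunctor R).obj V)
      exact ((isIsoZero_iff_source_target_isZero _ _).mp this).2.of_mono biprod.inl
    let φ : Y.V ⟶ V ⊞ V := f.1
    let a : Y.V ⟶ V := φ ≫ biprod.fst
    let b : Y.V ⟶ V := -(Y.ι ≫ a)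
    have hφ : φ = biprod.lift a b := val_eq_lift f
    have : Mono φ := (Ffunctor R).map_mono f
    have hk : kernel.ι a ≫ φ = (kernel.ι a ≫ b) ≫ biprod.inr := by
      rw [hφ]
      ext <;> simp [a]
    have : Mono (kernel.ι a ≫ b) := mono_of_mono_fac hk.symm
    by_cases hkb : kernel.ι a ≫ b = 0
    · have : Mono a := Preadditive.mono_of_kernel_zero ((cancel_mono φ).mp (by simp [hk, hkb]))
      have ha : a ≠ 0 := fun ha => hf (CObj.hom_ext (show φ = 0 by ext <;> simp [hφ, b, ha]))
      have : IsIso a := isIso_of_mono_of_nonzero ha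
      exact absurd (Y.exists_sq_eq_neg_one_of_iso (asIso a)) hV
    · have : IsIso (kernel.ι a ≫ b) := isIso_of_mono_of_nonzero hkb
      exact isIso_of_comp_eq_inr f (inv (kernel.ι a ≫ b) ≫ kernel.ι a)
        (show (inv (kernel.ι a ≫ b) ≫ kernel.ι a) ≫ φ = biprod.inr by simp [hk])

open scoped TensorProduct Quaternion

variable [EssentiallySmall.{v} R]

theorem statement4
    (V : R) [Simple V] :
    Simple ((Efunctor R).obj V) ∨
      ∃ W : CObj R, Simple W ∧
        Nonempty ((Efunctor R).obj V ≅ csum W ((Bfunctor R).obj W)) ∧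
        Nonempty ((Ffunctor R).obj W ≅ V) := by
  by_cases hJ : ∃ J : V ⟶ V, J ≫ J = -𝟙 V
  · obtain ⟨J, hJ⟩ := hJ
    let W : CObj R := ⟨V, J, hJ⟩
    have : Simple ((Ffunctor R).obj W) := ‹Simple V›
    exact Or.inr ⟨W, (Ffunctor R).simple_of_simple_obj W, ⟨Efunctor.objIsoCsum W⟩, ⟨Iso.refl V⟩⟩
  · exact Or.inl (Efunctor.simple_obj_of_not_exists_sq_eq_neg_one hJ)
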